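/- arXiv:math/0009081 — 6 statements merged into one kernel-verified Lean document; each statement's English description precedes it below -/
import Mathlib

section
/- Give the torus t/Λ the quotient topology and give the subgroup T^w = F⁻¹(Λ)/Λ the subspace topology. Then the connected component of the identity of T^w is exactly ((ker F) + Λ)/Λ, i.e. the image of the linear subspace ker F under the quotient map t → t/Λ. -/
/-- With the torus `t/Λ` given the quotient topology and the subgroup
`T^w = F⁻¹(Λ)/Λ` the subspace topology, the connected component of the identity of `T^w`
is exactly `((ker F) + Λ)/Λ`, i.e. the image of the linear subspace `ker F` under the
quotient map `t → t/Λ`. -/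
theorem stmt_1 {t : Type*} [NormedAddCommGroup t] [InnerProductSpace ℝ t]
    [FiniteDimensional ℝ t]
    (Λ : Submodule ℤ t) [DiscreteTopology Λ]
    (hspan : Submodule.span ℝ (Λ : Set t) = ⊤)
    (L : t ≃ₗᵢ[ℝ] t) (hL : ⇑L '' (Λ : Set t) = (Λ : Set t))
    (F : t →ₗ[ℝ] t) (hF : ∀ x, F x = L x - x) :
    connectedComponent (0 : (AddSubgroup.map (QuotientAddGroup.mk' Λ.toAddSubgroup)
        (Λ.toAddSubgroup.comap F.toAddMonoidHom))) =
      ((((LinearMap.ker F).toAddSubgroup.map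
          (QuotientAddGroup.mk' Λ.toAddSubgroup)).addSubgroupOf
          (AddSubgroup.map (QuotientAddGroup.mk' Λ.toAddSubgroup)
            (Λ.toAddSubgroup.comap F.toAddMonoidHom)) : AddSubgroup _) : Set _) := by
  classical
  set mk := QuotientAddGroup.mk' Λ.toAddSubgroup with hmk
  set Tw := AddSubgroup.map mk (Λ.toAddSubgroup.comap F.toAddMonoidHom) with hTw
  set K := (LinearMap.ker F).toAddSubgroup.map mk with hK
  -- basic facts
  have hLΛ : ∀ x ∈ Λ, L x ∈ Λ := by
    intro x hx
    have : L x ∈ ⇑L '' (Λ : Set t) := ⟨x, hx, rfl⟩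
    rwa [hL] at this
  have hFΛ : ∀ x ∈ Λ, F x ∈ Λ := by
    intro x hx
    rw [hF]
    exact sub_mem (hLΛ x hx) hx
  have hFnorm : ∀ x : t, ‖F x‖ ≤ 2 * ‖x‖ := by
    intro x
    rw [hF]
    calc ‖L x - x‖ ≤ ‖L x‖ + ‖x‖ := norm_sub_le _ _
    _ = 2 * ‖x‖ := by rw [L.norm_map]; ring
  -- discreteness: get ε
  obtain ⟨ε, hε, hball⟩ : ∃ ε > 0, ∀ x ∈ Λ, ‖x‖ < ε → x = 0 := by
    have h0 : IsOpen ({0} : Set Λ) := isOpen_discrete _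
    rw [Metric.isOpen_iff] at h0
    obtain ⟨ε, hε, hb⟩ := h0 0 rfl
    refine ⟨ε, hε, fun x hx hxn => ?_⟩
    have : (⟨x, hx⟩ : Λ) ∈ Metric.ball (0 : Λ) ε := by
      simp [Metric.mem_ball, Subtype.dist_eq, dist_eq_norm, hxn]
    have := hb this
    simpa using congrArg Subtype.val this
  -- the set S
  set S : Set Tw := ((K.addSubgroupOf Tw : AddSubgroup Tw) : Set Tw) with hS
  have hmem0 : (0 : Tw) ∈ S := (K.addSubgroupOf Tw).zero_mem
  -- key: V ⊆ S where V is preimage of image of small ball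
  have hVsub : (Subtype.val ⁻¹' (⇑mk '' Metric.ball (0:t) (ε/2)) : Set Tw) ⊆ S := by
    rintro ⟨q, hq⟩ ⟨x, hx, hxq⟩
    simp only [Metric.mem_ball, dist_zero_right] at hx
    obtain ⟨y, hy, hyq⟩ := hq
    have hxy : x - y ∈ Λ := by
      have heq : mk x = mk y := hxq.trans hyq.symm
      have : mk (x - y) = 0 := by rw [map_sub, sub_eq_zero]; exact heq
      exact (QuotientAddGroup.eq_zero_iff _).mp this
    have hFx : F x ∈ Λ := by
      have : F x = F y + F (x - y) := by rw [map_sub]; abel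
      rw [this]
      exact add_mem hy (hFΛ _ hxy)
    have hFx0 : F x = 0 := by
      apply hball _ hFx
      calc ‖F x‖ ≤ 2 * ‖x‖ := hFnorm x
      _ < 2 * (ε/2) := by linarith
      _ = ε := by ring
    show _ ∈ K.addSubgroupOf Tw
    rw [AddSubgroup.mem_addSubgroupOf]
    exact ⟨x, hFx0, hxq⟩
  have hVopen : IsOpen (Subtype.val ⁻¹' (⇑mk '' Metric.ball (0:t) (ε/2)) : Set Tw) :=
    (QuotientAddGroup.isOpenMap_coe _ Metric.isOpen_ball).preimage continuous_subtype_val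
  have hV0 : (0 : Tw) ∈ (Subtype.val ⁻¹' (⇑mk '' Metric.ball (0:t) (ε/2)) : Set Tw) :=
    ⟨0, by simpa using hε, by simp⟩
  -- S is open subgroup
  have hSopen : IsOpen S :=
    AddSubgroup.isOpen_of_mem_nhds _ (Filter.mem_of_superset (hVopen.mem_nhds hV0) hVsub)
  have hSclosed : IsClosed S := AddSubgroup.isClosed_of_isOpen _ hSopen
  -- S is preconnected
  have hSpre : IsPreconnected S := by
    refine Topology.IsEmbedding.subtypeVal.toIsInducing.isPreconnected_image.mp ?_
    have himg : Subtype.val '' S = (K : Set _) := by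
      ext q
      constructor
      · rintro ⟨⟨q, hq⟩, hmem, rfl⟩
        exact (AddSubgroup.mem_addSubgroupOf).mp hmem
      · rintro hq
        have hqTw : q ∈ Tw := by
          obtain ⟨x, hx, rfl⟩ := hq
          exact ⟨x, by simpa [LinearMap.mem_ker.mp hx] using Λ.zero_mem, rfl⟩
        exact ⟨⟨q, hqTw⟩, (AddSubgroup.mem_addSubgroupOf).mpr hq, rfl⟩
    rw [himg]
    have hKeq : (K : Set _) = ⇑mk '' (LinearMap.ker F : Set t) := rfl
    rw [hKeq]
    exact ((LinearMap.ker F).convex.isPreconnected).image _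
      continuous_quotient_mk'.continuousOn
  apply Set.eq_of_subset_of_subset
  · exact IsClopen.connectedComponent_subset ⟨hSclosed, hSopen⟩ hmem0
  · exact hSpre.subset_connectedComponent hmem0
end

section
/- The image of the homomorphism ψ : F⁻¹(Λ)/Λ → Λ/F(Λ), x + Λ ↦ F(x) + F(Λ), is exactly the torsion subgroup Tor(Λ/F(Λ)); consequently ψ induces a group isomorphism between the quotient (F⁻¹(Λ)/Λ) / ((ker F + Λ)/Λ) and Tor(Λ/F(Λ)). -/
/-!
An isometry preserving the discrete full lattice `Λ` permutes the finitely many lattice points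
in each ball, so it has finite order `m`. With `g = L = F + 1` and `Q = ∑_{k<m} ∑_{j<k} gʲ`,
the geometric-sum identity `F Q F = -m F` shows that `m • F y ∈ F(Λ)` whenever `F y ∈ Λ`,
so `ψ` lands in the torsion. Conversely, if `n • z = F μ` with `μ ∈ Λ`, then `z = F (μ / n)`.
The kernel of `ψ` is the image of `ker F`, and the first isomorphism theorem gives the rest.
-/

open Finset QuotientAddGroup AddSubgroup

theorem LinearIsometryEquiv.coe_pow {E : Type*} [SeminormedAddCommGroup E] [NormedSpace ℝ E]
    (L : E ≃ₗᵢ[ℝ] E) (n : ℕ) : ⇑(L ^ n) = (⇑L)^[n] :=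
  hom_coe_pow _ rfl (fun _ _ => rfl) L n

theorem LinearIsometryEquiv.isOfFinOrder_of_mapsTo_lattice {E : Type*} [NormedAddCommGroup E]
    [NormedSpace ℝ E] [FiniteDimensional ℝ E] {Λ : Submodule ℤ E} [DiscreteTopology Λ]
    (hspan : Submodule.span ℝ (Λ : Set E) = ⊤) {L : E ≃ₗᵢ[ℝ] E} (hL : Set.MapsTo L Λ Λ) :
    IsOfFinOrder L := by
  obtain ⟨s, hsΛ, hs, hli⟩ := exists_linearIndependent ℝ (Λ : Set E)
  rw [hspan] at hs
  have : Finite s := hli.setFinite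
  have hΛfin (r : ℝ) : (Metric.closedBall 0 r ∩ (Λ : Set E)).Finite :=
    Metric.finite_isBounded_inter_isClosed DiscreteTopology.isDiscrete Metric.isBounded_closedBall
      (isClosed_of_discrete (H := Λ.toAddSubgroup))
  have hinj : Function.Injective fun (g : E ≃ₗᵢ[ℝ] E) (v : s) => g v := fun g h hgh =>
    toLinearEquiv_injective <| LinearEquiv.toLinearMap_injective <|
      LinearMap.ext_on hs fun v hv => congrFun hgh ⟨v, hv⟩
  rw [← finite_powers]
  refine Set.Finite.of_finite_image ?_ hinj.injOn
  refine (Set.Finite.pi fun v : s => hΛfin ‖(v : E)‖).subset ?_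
  rintro _ ⟨_, ⟨k, rfl⟩, rfl⟩ v -
  refine ⟨by simp, ?_⟩
  change (L ^ k) v ∈ Λ
  rw [coe_pow]
  exact hL.iterate k (hsΛ v.2)

theorem mul_sum_geom_sum_mul_of_add_one_pow_eq_one {A : Type*} [Ring A] (a : A) {m : ℕ}
    (hm : (a + 1) ^ m = 1) :
    a * (∑ k ∈ range m, ∑ j ∈ range k, (a + 1) ^ j) * a = -(m * a) := by
  have hQ : (∑ k ∈ range m, ∑ j ∈ range k, (a + 1) ^ j) * a
      = ∑ k ∈ range m, (a + 1) ^ k - m := by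
    calc _ = ∑ k ∈ range m, ((a + 1) ^ k - 1) := by
          rw [sum_mul]
          exact sum_congr rfl fun k _ => by simpa using geom_sum_mul (a + 1) k
      _ = _ := by simp [sum_sub_distrib]
  have hN : a * ∑ k ∈ range m, (a + 1) ^ k = 0 := by
    simpa [hm] using mul_geom_sum (a + 1) m
  rw [mul_assoc, hQ, mul_sub, hN, zero_sub, Nat.cast_comm]

theorem nsmul_mem_map_of_add_one_pow_eq_one {R M : Type*} [Ring R] [AddCommGroup M] [Module R M]
    {F : Module.End R M} {m : ℕ} (hm : (F + 1) ^ m = 1) {Λ : AddSubgroup M}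
    (hΛ : ∀ x ∈ Λ, F x ∈ Λ) {y : M} (hy : F y ∈ Λ) :
    m • F y ∈ Λ.map F.toAddMonoidHom := by
  set Q := ∑ k ∈ range m, ∑ j ∈ range k, (F + 1) ^ j
  have hQ : ∀ x ∈ Λ, Q x ∈ Λ := by
    have hpow (j : ℕ) : Set.MapsTo ⇑((F + 1) ^ j) Λ Λ := by
      rw [Module.End.coe_pow]
      exact Set.MapsTo.iterate (fun x hx => add_mem (hΛ x hx) hx) j
    intro x hx
    simp only [Q, LinearMap.coe_sum, Finset.sum_apply]
    exact sum_mem fun k _ => sum_mem fun j _ => hpow j hx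
  refine ⟨-Q (F y), neg_mem (hQ _ hy), ?_⟩
  have := congrArg (· y) (mul_sum_geom_sum_mul_of_add_one_pow_eq_one F hm)
  simp only [Module.End.mul_apply, LinearMap.neg_apply, Module.End.natCast_apply] at this
  change F (Q (F y)) = -(m • F y) at this
  simp [this]

section Quotients

variable {E : Type*} [AddCommGroup E]

/-- `F⁻¹(Λ)/Λ`, as a subgroup of `E ⧸ Λ`. -/
abbrev AddSubgroup.quotPreimage (Λ : AddSubgroup E) (F : E →+ E) : AddSubgroup (E ⧸ Λ) :=
  (Λ.comap F).map (mk' Λ)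

/-- `Λ/F(Λ)`. -/
abbrev AddSubgroup.quotImage (Λ : AddSubgroup E) (F : E →+ E) : Type _ :=
  Λ ⧸ (Λ.map F).addSubgroupOf Λ

theorem AddSubgroup.exists_eq_mk_of_quotPreimage {Λ : AddSubgroup E} {F : E →+ E}
    (d : Λ.quotPreimage F) : ∃ x, ∃ hx : F x ∈ Λ, d = ⟨mk' Λ x, mem_map.mpr ⟨x, hx, rfl⟩⟩ := by
  obtain ⟨_, x, hx, rfl⟩ := d
  exact ⟨x, hx, rfl⟩

namespace AddSubgroup.quotPreimage

theorem range_le_torsion {R : Type*} [Ring R] [Module R E] {Λ : AddSubgroup E}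
    {F : Module.End R E} {m : ℕ} (hm0 : 0 < m) (hm : (F + 1) ^ m = 1) (hΛ : ∀ x ∈ Λ, F x ∈ Λ)
    {ψ : Λ.quotPreimage F.toAddMonoidHom →+ Λ.quotImage F.toAddMonoidHom}
    (hψ : ∀ x (hx : F x ∈ Λ),
      ψ ⟨mk' Λ x, mem_map.mpr ⟨x, hx, rfl⟩⟩ = QuotientAddGroup.mk ⟨F x, hx⟩) :
    ψ.range ≤ AddCommGroup.torsion _ := by
  rintro _ ⟨d, rfl⟩
  obtain ⟨y, hy, rfl⟩ := exists_eq_mk_of_quotPreimage d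
  rw [hψ y hy]
  refine isOfFinAddOrder_iff_nsmul_eq_zero.mpr ⟨m, hm0, ?_⟩
  rw [← mk_nsmul, eq_zero_iff, mem_addSubgroupOf]
  exact nsmul_mem_map_of_add_one_pow_eq_one hm hΛ hy

theorem torsion_le_range {K : Type*} [DivisionRing K] [CharZero K] [Module K E]
    {Λ : AddSubgroup E} {F : E →ₗ[K] E}
    {ψ : Λ.quotPreimage F.toAddMonoidHom →+ Λ.quotImage F.toAddMonoidHom}
    (hψ : ∀ x (hx : F x ∈ Λ),
      ψ ⟨mk' Λ x, mem_map.mpr ⟨x, hx, rfl⟩⟩ = QuotientAddGroup.mk ⟨F x, hx⟩) :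
    AddCommGroup.torsion _ ≤ ψ.range := by
  intro c hc
  obtain ⟨z, rfl⟩ := mk_surjective c
  obtain ⟨n, hn0, hnz⟩ := isOfFinAddOrder_iff_nsmul_eq_zero.mp hc
  rw [← mk_nsmul, eq_zero_iff, mem_addSubgroupOf] at hnz
  obtain ⟨μ, -, hμ⟩ := hnz
  have hFx : F ((n : K)⁻¹ • μ) = z := by
    rw [map_smul, show F μ = n • (z : E) from hμ, ← Nat.cast_smul_eq_nsmul K, inv_smul_smul₀]
    exact_mod_cast hn0.ne'
  have hx : F ((n : K)⁻¹ • μ) ∈ Λ := hFx ▸ z.2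
  exact ⟨_, (hψ _ hx).trans (congrArg _ (Subtype.ext hFx))⟩

theorem ker_eq {R : Type*} [Ring R] [Module R E] {Λ : AddSubgroup E} {F : E →ₗ[R] E}
    {ψ : Λ.quotPreimage F.toAddMonoidHom →+ Λ.quotImage F.toAddMonoidHom}
    (hψ : ∀ x (hx : F x ∈ Λ),
      ψ ⟨mk' Λ x, mem_map.mpr ⟨x, hx, rfl⟩⟩ = QuotientAddGroup.mk ⟨F x, hx⟩) :
    ψ.ker = ((LinearMap.ker F).toAddSubgroup.map (mk' Λ)).addSubgroupOf
      (Λ.quotPreimage F.toAddMonoidHom) := by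
  ext d
  obtain ⟨y, hy, rfl⟩ := exists_eq_mk_of_quotPreimage d
  rw [AddMonoidHom.mem_ker, hψ y hy, eq_zero_iff, mem_addSubgroupOf, mem_addSubgroupOf]
  simp only [mem_map, mk'_apply, QuotientAddGroup.eq]
  constructor
  · rintro ⟨μ, hμ, hFμ⟩
    refine ⟨y - μ, ?_, by simpa using hμ⟩
    change F (y - μ) = 0
    rw [map_sub, sub_eq_zero]
    exact hFμ.symm
  · rintro ⟨x, hx : F x = 0, hxy⟩
    exact ⟨-x + y, hxy, by simp [hx]⟩

end AddSubgroup.quotPreimage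

end Quotients

/-- The image of the homomorphism `ψ : F⁻¹(Λ)/Λ → Λ/F(Λ)`,
`x + Λ ↦ F x + F(Λ)`, is exactly the torsion subgroup `Tor(Λ/F(Λ))`; consequently `ψ`
induces a group isomorphism `(F⁻¹(Λ)/Λ) / ((ker F + Λ)/Λ) ≃ Tor(Λ/F(Λ))`. -/
theorem stmt_2 {t : Type*} [NormedAddCommGroup t] [InnerProductSpace ℝ t]
    [FiniteDimensional ℝ t]
    (Λ : Submodule ℤ t) [DiscreteTopology Λ]
    (hspan : Submodule.span ℝ (Λ : Set t) = ⊤)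
    (L : t ≃ₗᵢ[ℝ] t) (hL : ⇑L '' (Λ : Set t) = (Λ : Set t))
    (F : t →ₗ[ℝ] t) (hF : ∀ x, F x = L x - x)
    (ψ : (AddSubgroup.map (QuotientAddGroup.mk' Λ.toAddSubgroup)
            (Λ.toAddSubgroup.comap F.toAddMonoidHom)) →+
          (Λ.toAddSubgroup ⧸
            (AddSubgroup.map F.toAddMonoidHom Λ.toAddSubgroup).addSubgroupOf Λ.toAddSubgroup))
    (hψ : ∀ (x : t) (hx : F x ∈ Λ),
        ψ ⟨QuotientAddGroup.mk' Λ.toAddSubgroup x, AddSubgroup.mem_map.mpr ⟨x, hx, rfl⟩⟩ =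
          QuotientAddGroup.mk ⟨F x, hx⟩) :
    ψ.range = AddCommGroup.torsion
        (Λ.toAddSubgroup ⧸
          (AddSubgroup.map F.toAddMonoidHom Λ.toAddSubgroup).addSubgroupOf Λ.toAddSubgroup) ∧
    ∃ e : ((AddSubgroup.map (QuotientAddGroup.mk' Λ.toAddSubgroup)
            (Λ.toAddSubgroup.comap F.toAddMonoidHom)) ⧸
            (((LinearMap.ker F).toAddSubgroup.map
              (QuotientAddGroup.mk' Λ.toAddSubgroup)).addSubgroupOf
              (AddSubgroup.map (QuotientAddGroup.mk' Λ.toAddSubgroup)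
                (Λ.toAddSubgroup.comap F.toAddMonoidHom)))) ≃+
          AddCommGroup.torsion
            (Λ.toAddSubgroup ⧸
              (AddSubgroup.map F.toAddMonoidHom Λ.toAddSubgroup).addSubgroupOf Λ.toAddSubgroup),
      ∀ x, (e (QuotientAddGroup.mk x) : Λ.toAddSubgroup ⧸
              (AddSubgroup.map F.toAddMonoidHom Λ.toAddSubgroup).addSubgroupOf Λ.toAddSubgroup)
            = ψ x := by
  have hΛL : Set.MapsTo L Λ Λ := Set.mapsTo_iff_image_subset.mpr hL.le
  have hΛF : ∀ x ∈ Λ, F x ∈ Λ := fun x hx => hF x ▸ sub_mem (hΛL hx) hx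
  obtain ⟨m, hm0, hLm⟩ := (L.isOfFinOrder_of_mapsTo_lattice hspan hΛL).exists_pow_eq_one
  have hFm : (F + 1) ^ m = 1 := by
    have hFL : ⇑(F + 1) = L := funext fun x => by simp [hF]
    ext x
    rw [Module.End.coe_pow, hFL, ← L.coe_pow, hLm]
    rfl
  have hrange := le_antisymm (quotPreimage.range_le_torsion hm0 hFm hΛF hψ)
    (quotPreimage.torsion_le_range (Λ := Λ.toAddSubgroup) hψ)
  exact ⟨hrange, ((quotientAddEquivOfEq (quotPreimage.ker_eq hψ).symm).trans
    (quotientKerEquivRange ψ)).trans (AddEquiv.addSubgroupCongr hrange), fun _ => rfl⟩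
end

section
/- As subsets of t, the set {x ∈ t : ⟨x, y⟩ ∈ ℤ for every y ∈ t with F(y) ∈ Λ̂} is equal to F(Λ). -/
/-!
Writing `N^∨` for the dual of a `ℤ`-submodule `N` with respect to the inner product, the
orthogonality of `L` gives `⟪y, L l - l⟫ = ⟪y - L y, L l⟫`; since `L` permutes `Λ`, the condition
`F y ∈ Λ̂` says exactly that `y ∈ F(Λ)^∨`. The set in question is therefore `F(Λ)^∨^∨`, and
`F(Λ) ⊆ Λ` is discrete. A discrete subgroup `N` of a finite-dimensional inner product space is its
own double dual: `(span ℝ N)ᗮ ⊆ N^∨` forces `N^∨^∨ ⊆ span ℝ N`, and inside `span ℝ N` the group `N`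
is a full lattice, for which double duality is the dual basis computation.
-/

open scoped RealInnerProductSpace

open LinearMap (BilinForm)

section IntegralDual

variable {E : Type*} [NormedAddCommGroup E] [InnerProductSpace ℝ E]

lemma mem_dualSubmodule_innerₗ {N : Submodule ℤ E} {x : E} :
    x ∈ BilinForm.dualSubmodule (innerₗ E) N ↔ ∀ y ∈ N, ∃ n : ℤ, ⟪x, y⟫ = n := by
  simp only [BilinForm.mem_dualSubmodule, Submodule.mem_one, innerₗ_apply_apply,
    algebraMap_int_eq, eq_intCast, eq_comm]

variable (E) in
lemma innerₗ_nondegenerate : (innerₗ E).Nondegenerate :=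
  ⟨fun x hx ↦ inner_self_eq_zero.mp (hx x), fun x hx ↦ inner_self_eq_zero.mp (hx x)⟩

lemma bilinForm_flip_innerₗ : BilinForm.flip (innerₗ E) = innerₗ E := flip_innerₗ E

lemma le_dualSubmodule_dualSubmodule_innerₗ (N : Submodule ℤ E) :
    N ≤ BilinForm.dualSubmodule (innerₗ E) (BilinForm.dualSubmodule (innerₗ E) N) := by
  have := (BilinForm.le_flip_dualSubmodule (innerₗ E) (N₁ := N)).mpr le_rfl
  rwa [bilinForm_flip_innerₗ] at this

lemma orthogonal_span_le_dualSubmodule_innerₗ (N : Submodule ℤ E) :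
    ((Submodule.span ℝ (N : Set E))ᗮ : Set E) ⊆ BilinForm.dualSubmodule (innerₗ E) N :=
  fun v hv ↦ mem_dualSubmodule_innerₗ.mpr fun y hy ↦
    ⟨0, by rw [(Submodule.mem_orthogonal' _ _).mp hv y (Submodule.subset_span hy), Int.cast_zero]⟩

lemma eq_zero_of_forall_mul_eq_intCast {a : ℝ} (h : ∀ c : ℝ, ∃ n : ℤ, c * a = n) : a = 0 := by
  by_contra ha
  obtain ⟨n, hn⟩ := h (2 * a)⁻¹
  rw [show (2 * a)⁻¹ * a = 1 / 2 by field_simp] at hn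
  have : (2 * n : ℤ) = 1 := by exact_mod_cast (by linarith : (2 * n : ℝ) = 1)
  omega

lemma mem_span_of_mem_dualSubmodule_dualSubmodule_innerₗ [FiniteDimensional ℝ E]
    {N : Submodule ℤ E} {x : E}
    (hx : x ∈ BilinForm.dualSubmodule (innerₗ E) (BilinForm.dualSubmodule (innerₗ E) N)) :
    x ∈ Submodule.span ℝ (N : Set E) := by
  rw [← Submodule.orthogonal_orthogonal (Submodule.span ℝ (N : Set E)), Submodule.mem_orthogonal]
  intro v hv
  refine eq_zero_of_forall_mul_eq_intCast fun c ↦ ?_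
  obtain ⟨n, hn⟩ := mem_dualSubmodule_innerₗ.mp hx (c • v)
    (orthogonal_span_le_dualSubmodule_innerₗ N (Submodule.smul_mem _ c hv))
  exact ⟨n, by rw [← hn, real_inner_smul_right, real_inner_comm]⟩

theorem dualSubmodule_dualSubmodule_innerₗ_of_isZLattice [FiniteDimensional ℝ E]
    (N : Submodule ℤ E) [DiscreteTopology N] [IsZLattice ℝ N] :
    BilinForm.dualSubmodule (innerₗ E) (BilinForm.dualSubmodule (innerₗ E) N) = N := by
  have := BilinForm.dualSubmodule_dualSubmodule_flip_of_basis (R := ℤ) (innerₗ E)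
    (innerₗ_nondegenerate E) ((Module.Free.chooseBasis ℤ N).ofZLatticeBasis ℝ N)
  rwa [Module.Basis.ofZLatticeBasis_span, bilinForm_flip_innerₗ] at this

theorem dualSubmodule_dualSubmodule_innerₗ [FiniteDimensional ℝ E]
    (N : Submodule ℤ E) [DiscreteTopology N] :
    BilinForm.dualSubmodule (innerₗ E) (BilinForm.dualSubmodule (innerₗ E) N) = N := by
  refine le_antisymm (fun x hx ↦ ?_) (le_dualSubmodule_dualSubmodule_innerₗ N)
  set V := Submodule.span ℝ (N : Set E)
  let N' : Submodule ℤ V := N.comap (V.subtype.restrictScalars ℤ)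
  have : DiscreteTopology N' := DiscreteTopology.preimage_of_continuous_injective (N : Set E)
    V.subtype.continuous_of_finiteDimensional V.injective_subtype
  have : IsZLattice ℝ N' := ⟨Submodule.span_span_coe_preimage⟩
  have hx' : (⟨x, mem_span_of_mem_dualSubmodule_dualSubmodule_innerₗ hx⟩ : V) ∈
      BilinForm.dualSubmodule (innerₗ V) (BilinForm.dualSubmodule (innerₗ V) N') := by
    refine mem_dualSubmodule_innerₗ.mpr fun w hw ↦ mem_dualSubmodule_innerₗ.mp hx w ?_
    exact mem_dualSubmodule_innerₗ.mpr fun y hy ↦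
      mem_dualSubmodule_innerₗ.mp hw ⟨y, Submodule.subset_span hy⟩ hy
  rwa [dualSubmodule_dualSubmodule_innerₗ_of_isZLattice] at hx'

end IntegralDual

section OrthogonalAutomorphism

variable {E : Type*} [NormedAddCommGroup E] [InnerProductSpace ℝ E]

lemma LinearIsometry.inner_map_sub_self_right (L : E →ₗᵢ[ℝ] E) (x y : E) :
    ⟪y, L x - x⟫ = ⟪y - L y, L x⟫ := by
  rw [inner_sub_right, inner_sub_left, L.inner_map_map]

variable {L : E ≃ₗᵢ[ℝ] E} {Λ : Submodule ℤ E}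

lemma map_sub_one_le (hL : ⇑L '' (Λ : Set E) = Λ) :
    Λ.map (((L : E →ₗ[ℝ] E) - 1).restrictScalars ℤ) ≤ Λ := by
  rintro _ ⟨l, hl, rfl⟩
  have hLl : L l ∈ (Λ : Set E) := hL ▸ Set.mem_image_of_mem L hl
  simpa using sub_mem hLl hl

lemma sub_one_apply_mem_dualSubmodule_iff (hL : ⇑L '' (Λ : Set E) = Λ) (y : E) :
    ((L : E →ₗ[ℝ] E) - 1) y ∈ BilinForm.dualSubmodule (innerₗ E) Λ ↔
      y ∈ BilinForm.dualSubmodule (innerₗ E) (Λ.map (((L : E →ₗ[ℝ] E) - 1).restrictScalars ℤ)) := by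
  have hΛ (z : E) :
      z ∈ BilinForm.dualSubmodule (innerₗ E) Λ ↔ ∀ l ∈ Λ, ∃ n : ℤ, ⟪z, L l⟫ = n := by
    rw [mem_dualSubmodule_innerₗ]
    change (∀ l ∈ (Λ : Set E), _) ↔ _
    rw [← hL, Set.forall_mem_image]
    rfl
  have hinner (l : E) :
      ⟪y, ((L : E →ₗ[ℝ] E) - 1) l⟫ = ⟪-(((L : E →ₗ[ℝ] E) - 1) y), L l⟫ := by
    simpa using L.toLinearIsometry.inner_map_sub_self_right l y
  rw [← neg_mem_iff, hΛ, mem_dualSubmodule_innerₗ]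
  simp only [Submodule.mem_map, forall_exists_index, and_imp, forall_apply_eq_imp_iff₂,
    LinearMap.restrictScalars_apply, hinner]

end OrthogonalAutomorphism

theorem stmt_4_general {t : Type*} [NormedAddCommGroup t] [InnerProductSpace ℝ t]
    [FiniteDimensional ℝ t]
    (Λ : Submodule ℤ t) [DiscreteTopology Λ]
    (L : t ≃ₗᵢ[ℝ] t) (hL : ⇑L '' (Λ : Set t) = (Λ : Set t))
    (F : t →ₗ[ℝ] t) (hF : ∀ x, F x = L x - x)
    (Λhat : Set t) (hΛhat : Λhat = {x : t | ∀ l ∈ Λ, ∃ n : ℤ, ⟪x, l⟫ = (n : ℝ)}) :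
    {x : t | ∀ y : t, F y ∈ Λhat → ∃ n : ℤ, ⟪x, y⟫ = (n : ℝ)} = ⇑F '' (Λ : Set t) := by
  obtain rfl : F = (L : t →ₗ[ℝ] t) - 1 := LinearMap.ext fun x ↦ by simp [hF]
  set N := Λ.map (((L : t →ₗ[ℝ] t) - 1).restrictScalars ℤ)
  have : DiscreteTopology N := DiscreteTopology.of_subset ‹_› (map_sub_one_le hL)
  have hΛhat' : Λhat = BilinForm.dualSubmodule (innerₗ t) Λ := by
    ext x
    rw [hΛhat, SetLike.mem_coe, mem_dualSubmodule_innerₗ, Set.mem_ofPred_eq]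
  calc {x : t | ∀ y : t, ((L : t →ₗ[ℝ] t) - 1) y ∈ Λhat → ∃ n : ℤ, ⟪x, y⟫ = (n : ℝ)}
      = BilinForm.dualSubmodule (innerₗ t) (BilinForm.dualSubmodule (innerₗ t) N) := by
        ext x
        simp only [hΛhat', SetLike.mem_coe, sub_one_apply_mem_dualSubmodule_iff hL,
          mem_dualSubmodule_innerₗ (x := x), Set.mem_ofPred_eq]
        rfl
    _ = N := by rw [dualSubmodule_dualSubmodule_innerₗ]
    _ = _ := Submodule.map_coe _ _

/-- With `Λ̂ = {x : ⟪x, λ⟫ ∈ ℤ for all λ ∈ Λ}` the dual lattice, the set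
`{x ∈ t : ⟪x, y⟫ ∈ ℤ for every y ∈ t with F y ∈ Λ̂}` is equal to `F(Λ)`. -/
theorem stmt_4 {t : Type*} [NormedAddCommGroup t] [InnerProductSpace ℝ t]
    [FiniteDimensional ℝ t]
    (Λ : Submodule ℤ t) [DiscreteTopology Λ]
    (hspan : Submodule.span ℝ (Λ : Set t) = ⊤)
    (L : t ≃ₗᵢ[ℝ] t) (hL : ⇑L '' (Λ : Set t) = (Λ : Set t))
    (F : t →ₗ[ℝ] t) (hF : ∀ x, F x = L x - x)
    (Λhat : Set t) (hΛhat : Λhat = {x : t | ∀ l ∈ Λ, ∃ n : ℤ, ⟪x, l⟫ = (n : ℝ)}) :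
    {x : t | ∀ y : t, F y ∈ Λhat → ∃ n : ℤ, ⟪x, y⟫ = (n : ℝ)} = ⇑F '' (Λ : Set t) :=
  stmt_4_general Λ L hL F hF Λhat hΛhat
end

section
/- Let Γ be a finitely generated abelian group. Give the group Hom(Γ, ℝ/ℤ) of all group homomorphisms from Γ to the circle ℝ/ℤ the topology of pointwise convergence. Then the restriction map Hom(Γ, ℝ/ℤ) → Hom(Tor Γ, ℝ/ℤ), f ↦ f|_{Tor Γ}, is surjective, its kernel is the connected component of the identity, and hence it induces a group isomorphism from the group of connected components of Hom(Γ, ℝ/ℤ) onto Hom(Tor Γ, ℝ/ℤ). -/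
/-!
Since `ℝ/ℤ` is divisible, hence an injective `ℤ`-module, every character of `Tor Γ` extends to `Γ`.
A character vanishing on `Tor Γ` factors through the free group `Γ / Tor Γ`, so it is `g mod ℤ`
for some `g : Γ →+ ℝ`, and `t ↦ t • g mod ℤ` joins it to `0`. Conversely, evaluation at an element
of order `n` maps the identity component onto a connected subset of the finite set of `n`-torsion
points of the circle, which must be `{0}`.
-/

open Topology

theorem AddMonoidHom.compHom'_surjective {M N A : Type*} [AddCommGroup M] [AddCommGroup N]
    [AddCommGroup A] [DivisibleBy A ℤ] (f : M →+ N) (hf : Function.Injective f) :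
    Function.Surjective (f.compHom' : (N →+ A) →+ (M →+ A)) :=
  (Module.Baer.of_divisible A).extension_property_addMonoidHom f hf

theorem AddMonoidHom.exists_comp_eq_of_torsion_le_ker {Γ B C : Type*} [AddCommGroup Γ]
    [AddGroup.FG Γ] [AddCommGroup B] [AddCommGroup C] {π : B →+ C} (hπ : Function.Surjective π)
    (f : Γ →+ C) (hf : AddCommGroup.torsion Γ ≤ f.ker) : ∃ g : Γ →+ B, π.comp g = f := by
  have : Module.Finite ℤ Γ := Module.Finite.iff_addGroup_fg.mpr ‹_›
  have hker : Submodule.torsion ℤ Γ ≤ LinearMap.ker f.toIntLinearMap := by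
    rw [← Submodule.toAddSubgroup_le, Submodule.torsion_int]
    exact hf
  -- `Γ ⧸ torsion` is finitely generated and torsion-free, hence free, hence projective.
  obtain ⟨h, hh⟩ := Module.projective_lifting_property π.toIntLinearMap
    ((Submodule.torsion ℤ Γ).liftQ f.toIntLinearMap hker) hπ
  refine ⟨(h ∘ₗ (Submodule.torsion ℤ Γ).mkQ).toAddMonoidHom, AddMonoidHom.ext fun x => ?_⟩
  simpa using LinearMap.congr_fun hh (Submodule.Quotient.mk x)

section HomToAddCircle

variable {Γ : Type*} [AddCommGroup Γ] {p : ℝ} [TopologicalSpace (Γ →+ AddCircle p)]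

theorem AddMonoidHom.apply_eq_zero_of_mem_connectedComponent_zero
    (hcont : Continuous fun f : Γ →+ AddCircle p => (f : Γ → AddCircle p))
    {f : Γ →+ AddCircle p} (hf : f ∈ connectedComponent 0) {x : Γ}
    (hx : x ∈ AddCommGroup.torsion Γ) : f x = 0 := by
  obtain ⟨n, hn, hnx⟩ := isOfFinAddOrder_iff_nsmul_eq_zero.mp hx
  have hev : Continuous fun g : Γ →+ AddCircle p => g x := (continuous_apply x).comp hcont
  set C := (fun g : Γ →+ AddCircle p => g x) '' connectedComponent 0
  have hC : C.Finite := (AddCircle.finite_torsion p hn).subset <| by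
    rintro _ ⟨g, -, rfl⟩
    rw [Set.mem_ofPred_eq, ← map_nsmul, hnx, map_zero]
  have hsub : C.Subsingleton := by
    by_contra hnt
    exact (isPreconnected_connectedComponent.image _ hev.continuousOn).infinite_of_nontrivial
      (Set.not_subsingleton_iff.mp hnt) hC
  exact hsub ⟨f, hf, rfl⟩ ⟨0, mem_connectedComponent, rfl⟩

theorem AddMonoidHom.comp_mem_connectedComponent_zero
    (hind : IsInducing fun f : Γ →+ AddCircle p => (f : Γ → AddCircle p)) (g : Γ →+ ℝ) :
    (QuotientAddGroup.mk' _).comp g ∈ (connectedComponent 0 : Set (Γ →+ AddCircle p)) := by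
  let Φ : ℝ → (Γ →+ AddCircle p) := fun t => (QuotientAddGroup.mk' _).comp (t • g)
  have hΦ : Continuous Φ := hind.continuous_iff.mpr <| continuous_pi fun x =>
    (AddCircle.continuous_mk' p).comp (continuous_mul_const (g x))
  have hΦ0 : Φ 0 = 0 := by ext; simp [Φ]
  rw [← hΦ0]
  exact hΦ.image_connectedComponent_subset 0
    ⟨1, PreconnectedSpace.connectedComponent_eq_univ (0 : ℝ) ▸ trivial, by simp [Φ]⟩

theorem AddMonoidHom.ker_compHom'_torsion_eq_connectedComponent [AddGroup.FG Γ]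
    (hind : IsInducing fun f : Γ →+ AddCircle p => (f : Γ → AddCircle p)) :
    (((AddCommGroup.torsion Γ).subtype.compHom' : (Γ →+ AddCircle p) →+ _).ker :
      Set (Γ →+ AddCircle p)) =
      connectedComponent 0 := by
  ext f
  constructor
  · intro hf
    obtain ⟨g, rfl⟩ := exists_comp_eq_of_torsion_le_ker (QuotientAddGroup.mk'_surjective _) f
      fun x hx => mem_ker.mpr (DFunLike.congr_fun (mem_ker.mp hf) ⟨x, hx⟩)
    exact comp_mem_connectedComponent_zero hind g
  · intro hf
    ext x
    exact apply_eq_zero_of_mem_connectedComponent_zero hind.continuous hf x.2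

end HomToAddCircle

/-- Let `Γ` be a finitely generated abelian group.  Give `Hom(Γ, ℝ/ℤ)` the
topology of pointwise convergence.  Then the restriction map
`Hom(Γ, ℝ/ℤ) → Hom(Tor Γ, ℝ/ℤ)` is surjective, its kernel is the connected component of the
identity, and hence it induces a group isomorphism from the group of connected components of
`Hom(Γ, ℝ/ℤ)` onto `Hom(Tor Γ, ℝ/ℤ)`. -/
theorem stmt_6 (Γ : Type*) [AddCommGroup Γ] [AddGroup.FG Γ] :
    ∃ ρ : (Γ →+ AddCircle (1 : ℝ)) →+ ((AddCommGroup.torsion Γ) →+ AddCircle (1 : ℝ)),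
      (∀ (f : Γ →+ AddCircle (1 : ℝ)) (x : AddCommGroup.torsion Γ), ρ f x = f x) ∧
      Function.Surjective ρ ∧
      (letI : TopologicalSpace (Γ →+ AddCircle (1 : ℝ)) :=
          TopologicalSpace.induced (fun f => (f : Γ → AddCircle (1 : ℝ))) inferInstance;
        (ρ.ker : Set (Γ →+ AddCircle (1 : ℝ))) = connectedComponent 0) ∧
      ∃ e : ((Γ →+ AddCircle (1 : ℝ)) ⧸ ρ.ker) ≃+
          ((AddCommGroup.torsion Γ) →+ AddCircle (1 : ℝ)),
        ∀ f : Γ →+ AddCircle (1 : ℝ), e (QuotientAddGroup.mk f) = ρ f := by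
  have : Fact ((0 : ℝ) < 1) := ⟨one_pos⟩
  have hsurj := (AddCommGroup.torsion Γ).subtype.compHom'_surjective (A := AddCircle (1 : ℝ))
    Subtype.val_injective
  refine ⟨_, fun _ _ => rfl, hsurj, ?_, QuotientAddGroup.quotientKerEquivOfSurjective _ hsurj,
    fun _ => rfl⟩
  let _ : TopologicalSpace (Γ →+ AddCircle (1 : ℝ)) := .induced (fun f => ⇑f) inferInstance
  exact AddMonoidHom.ker_compHom'_torsion_eq_connectedComponent (IsInducing.induced _)
end

section
/- Let A be an abelian group, n ≥ 1, σ a permutation of {1,…,n}, and a ∈ A an element of finite additive order k. Consider the set S = {x ∈ Aⁿ : x_{σ(j)} = x_j + a for all j}, i.e. the fixed-point set of the map on Aⁿ given by permuting coordinates by σ and adding a. Then S is nonempty if and only if k divides the length of every cycle of σ; and when S is nonempty, S is in bijection with A^c, where c is the number of cycles of σ (counting fixed points as cycles of length 1). -/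
/-!
Along a cycle of `σ` a solution `x` increases by `a` at every step, so going once around a
cycle of length `ℓ` forces `ℓ • a = 0`. Conversely, if the order of `a` divides every cycle
length, fix a base point `r` in each cycle and put `x ((σ ^ m) r) = m • a`; this is well
defined because `(σ ^ m) r = (σ ^ l) r` forces `ℓ ∣ m - l`. Two solutions differ by a
`σ`-invariant function, that is, by a function on the cycles.
-/

open Equiv

namespace Equiv.Perm

variable {α : Type*} {σ : Perm α}

theorem orbitRel_zpowers_iff {i j : α} :
    MulAction.orbitRel (Subgroup.zpowers σ) α i j ↔ ∃ m : ℤ, (σ ^ m) j = i := by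
  rw [MulAction.orbitRel_apply, MulAction.mem_orbit_iff, Subgroup.exists_zpowers]
  rfl

theorem zpow_apply_eq_self_iff_minimalPeriod_dvd {m : ℤ} {j : α} :
    (σ ^ m) j = j ↔ (Function.minimalPeriod σ j : ℤ) ∣ m := by
  simpa [Perm.smul_def] using
    MulAction.zpow_smul_eq_iff_minimalPeriod_dvd (a := σ) (b := j) (n := m)

theorem apply_zpow_apply_of_invariant {β : Type*} {y : α → β} (hy : ∀ j, y (σ j) = y j)
    (m : ℤ) (j : α) : y ((σ ^ m) j) = y j := by
  induction m using Int.induction_on generalizing j with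
  | zero => rfl
  | succ m ih => rw [zpow_add_one, Perm.mul_apply, ih, hy]
  | pred m ih =>
    rw [zpow_sub_one, Perm.mul_apply, ih, ← hy, ← Perm.mul_apply, mul_inv_cancel,
      Perm.one_apply]

theorem forall_apply_eq_iff_orbitRel_le_ker {β : Type*} {y : α → β} :
    (∀ j, y (σ j) = y j) ↔ MulAction.orbitRel (Subgroup.zpowers σ) α ≤ Setoid.ker y := by
  refine ⟨fun hy i j hij => ?_, fun h j => h (orbitRel_zpowers_iff.mpr ⟨1, rfl⟩)⟩
  obtain ⟨m, rfl⟩ := orbitRel_zpowers_iff.mp hij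
  exact apply_zpow_apply_of_invariant hy m j

end Equiv.Perm

section ShiftSolutions

variable {α A : Type*}

def shiftSolutions [Add A] (σ : Perm α) (a : A) : Set (α → A) :=
  {x | ∀ j, x (σ j) = x j + a}

section AddGroup

variable [AddGroup A] {σ : Perm α} {a : A} {x : α → A}

theorem apply_zpow_apply_of_mem_shiftSolutions (hx : x ∈ shiftSolutions σ a) (m : ℤ) (j : α) :
    x ((σ ^ m) j) = x j + m • a := by
  induction m using Int.induction_on generalizing j with
  | zero => simp
  | succ m ih =>
    rw [zpow_add_one, Perm.mul_apply, ih, hx, add_assoc, ← one_add_zsmul, Int.add_comm 1]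
  | pred m ih =>
    have hx' : x (σ⁻¹ j) = x j + (-1 : ℤ) • a := by
      rw [neg_one_zsmul, ← sub_eq_add_neg, eq_sub_iff_add_eq, ← hx, ← Perm.mul_apply,
        mul_inv_cancel, Perm.one_apply]
    rw [zpow_sub_one, Perm.mul_apply, ih, hx', add_assoc, ← add_zsmul, neg_add_eq_sub]

theorem addOrderOf_dvd_minimalPeriod_of_mem_shiftSolutions (hx : x ∈ shiftSolutions σ a)
    (j : α) : addOrderOf a ∣ Function.minimalPeriod σ j := by
  have hper : (σ ^ (Function.minimalPeriod σ j : ℤ)) j = j :=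
    Perm.zpow_apply_eq_self_iff_minimalPeriod_dvd.mpr dvd_rfl
  have := apply_zpow_apply_of_mem_shiftSolutions hx (Function.minimalPeriod σ j) j
  rw [hper, left_eq_add, natCast_zsmul] at this
  exact addOrderOf_dvd_of_nsmul_eq_zero this

theorem zsmul_eq_zsmul_of_zpow_apply_eq {j : α}
    (hdvd : addOrderOf a ∣ Function.minimalPeriod σ j) {m l : ℤ}
    (h : (σ ^ m) j = (σ ^ l) j) : m • a = l • a := by
  have hper : (σ ^ (m - l)) j = j := by
    rw [sub_eq_neg_add, zpow_add, Perm.mul_apply, h, ← Perm.mul_apply, ← zpow_add,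
      neg_add_cancel, zpow_zero, Perm.one_apply]
  have hzero : (m - l) • a = 0 := addOrderOf_dvd_iff_zsmul_eq_zero.mp <|
    (Int.natCast_dvd_natCast.mpr hdvd).trans (Perm.zpow_apply_eq_self_iff_minimalPeriod_dvd.mp hper)
  rwa [sub_zsmul, ← sub_eq_add_neg, sub_eq_zero] at hzero

theorem shiftSolutions_nonempty (h : ∀ j, addOrderOf a ∣ Function.minimalPeriod σ j) :
    (shiftSolutions σ a).Nonempty := by
  let base (j : α) : α := (Quotient.mk (MulAction.orbitRel (Subgroup.zpowers σ) α) j).out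
  have hbase (j : α) : ∃ m : ℤ, (σ ^ m) (base j) = j :=
    Perm.orbitRel_zpowers_iff.mp (Quotient.exact (Quotient.out_eq _).symm)
  choose steps hsteps using hbase
  have hbase_apply (j : α) : base (σ j) = base j :=
    congrArg Quotient.out (Quotient.sound (Perm.orbitRel_zpowers_iff.mpr ⟨1, rfl⟩))
  refine ⟨fun j => steps j • a, fun j => ?_⟩
  rw [← add_one_zsmul]
  apply zsmul_eq_zsmul_of_zpow_apply_eq (h (base j))
  calc (σ ^ steps (σ j)) (base j)
      _ = σ j := by rw [← hbase_apply, hsteps]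
      _ = (σ ^ (steps j + 1)) (base j) := by
        rw [add_comm, zpow_add, zpow_one, Perm.mul_apply, hsteps]

end AddGroup

noncomputable def shiftSolutionsEquivOrbitFun [AddCommGroup A] {σ : Perm α} {a : A}
    {x₀ : α → A} (hx₀ : x₀ ∈ shiftSolutions σ a) :
    shiftSolutions σ a ≃ (MulAction.orbitRel.Quotient (Subgroup.zpowers σ) α → A) :=
  (Equiv.subtypeEquiv (Equiv.subRight x₀) fun x =>
    (forall_congr' fun j => by
      rw [Equiv.subRight_apply, Pi.sub_apply, Pi.sub_apply, hx₀ j, sub_add_eq_sub_sub_swap,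
        sub_left_inj, sub_eq_iff_eq_add]).symm.trans
      Perm.forall_apply_eq_iff_orbitRel_le_ker).trans
    (Setoid.liftEquiv _)

end ShiftSolutions

theorem stmt_11_general {A : Type*} [AddCommGroup A] (n : ℕ)
    (σ : Equiv.Perm (Fin n)) (a : A) :
    ({x : Fin n → A | ∀ j, x (σ j) = x j + a}.Nonempty ↔
      ∀ j : Fin n, addOrderOf a ∣ Function.minimalPeriod ⇑σ j) ∧
    ({x : Fin n → A | ∀ j, x (σ j) = x j + a}.Nonempty →
      Nonempty (({x : Fin n → A | ∀ j, x (σ j) = x j + a} : Set (Fin n → A)) ≃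
        (MulAction.orbitRel.Quotient (Subgroup.zpowers σ) (Fin n) → A))) :=
  ⟨⟨fun ⟨_, hx⟩ => addOrderOf_dvd_minimalPeriod_of_mem_shiftSolutions hx,
      shiftSolutions_nonempty⟩,
    fun ⟨_, hx₀⟩ => ⟨shiftSolutionsEquivOrbitFun hx₀⟩⟩

/-- Let `A` be an abelian group, `n ≥ 1`, `σ` a permutation of `{1,…,n}`,
and `a ∈ A` of finite additive order `k`.  The fixed-point set
`S = {x ∈ Aⁿ : x_{σ j} = x_j + a for all j}` is nonempty iff `k` divides the length of every
cycle of `σ` (the cycle length of `j` being the minimal period of `σ` at `j`, fixed points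
counting as cycles of length 1); and when `S` is nonempty it is in bijection with `A^c`,
`c` being the number of cycles, i.e. of orbits of `⟨σ⟩` on `{1,…,n}`. -/
theorem stmt_11 {A : Type*} [AddCommGroup A] (n : ℕ) (hn : 1 ≤ n)
    (σ : Equiv.Perm (Fin n)) (a : A) (ha : 0 < addOrderOf a) :
    ({x : Fin n → A | ∀ j, x (σ j) = x j + a}.Nonempty ↔
      ∀ j : Fin n, addOrderOf a ∣ Function.minimalPeriod ⇑σ j) ∧
    ({x : Fin n → A | ∀ j, x (σ j) = x j + a}.Nonempty →
      Nonempty (({x : Fin n → A | ∀ j, x (σ j) = x j + a} : Set (Fin n → A)) ≃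
        (MulAction.orbitRel.Quotient (Subgroup.zpowers σ) (Fin n) → A))) :=
  stmt_11_general n σ a
end

section
/- For all positive integers l, m, g, d one has τ_{l,m}^{g,d} = τ_{m,l}^{g,d}, where τ_{l,m}^{g,d} denotes the number of pairs (r, s) with r ∈ (ℤ/gℤ)^d, s a group homomorphism (ℤ/gℤ)^d → ℚ/ℤ, such that gcd(m,g)·r = 0, gcd(l,g)·s = 0, and s(r) = 0. -/
/-! The dot product identifies `(ℤ/gℤ)^d` with its character group `Hom((ℤ/gℤ)^d, ℚ/ℤ)` through an
isomorphism `Φ` whose pairing `Φ t x` is symmetric in `t` and `x`. The map `(r, s) ↦ (Φ⁻¹ s, Φ r)`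
therefore exchanges the two torsion conditions and preserves `s r = 0`, and it is an involution,
so it is a bijection between the pairs counted by `τ_{l,m}` and those counted by `τ_{m,l}`. -/

/-- `τ_{l,m}^{g,d}`: the number of pairs `(r, s)` with `r ∈ (ℤ/gℤ)^d` and
`s : (ℤ/gℤ)^d →+ ℚ/ℤ` such that `gcd(m,g)·r = 0`, `gcd(l,g)·s = 0`, and `s r = 0`. -/
noncomputable def tau (l m g d : ℕ) : ℕ :=
  Nat.card {p : (Fin d → ZMod g) × ((Fin d → ZMod g) →+ AddCircle (1 : ℚ)) //
    Nat.gcd m g • p.1 = 0 ∧ Nat.gcd l g • p.2 = 0 ∧ p.2 p.1 = 0}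

namespace AddCircle

variable {𝕜 : Type*} [Field 𝕜] [CharZero 𝕜] (p : 𝕜) (N : ℕ) [NeZero N]

noncomputable def ofZMod : ZMod N →+ AddCircle p :=
  ZMod.lift N
    ⟨(QuotientAddGroup.mk' _).comp ((AddMonoidHom.mulRight (p / N)).comp (Int.castAddHom 𝕜)),
      by simp [mul_div_cancel₀ _ (NeZero.ne (N : 𝕜))]⟩

variable {p N}

theorem ofZMod_intCast (j : ℤ) : ofZMod p N j = ((j * (p / N) : 𝕜) : AddCircle p) := by
  simp [ofZMod]

theorem ofZMod_injective (hp : p ≠ 0) : Function.Injective (ofZMod p N) := by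
  refine (injective_iff_map_eq_zero _).mpr fun z hz => ?_
  obtain ⟨j, rfl⟩ := ZMod.intCast_surjective z
  obtain ⟨n, hn⟩ := (coe_eq_zero_iff _).mp ((ofZMod_intCast j).symm.trans hz)
  have : (j : 𝕜) = n * N := by
    rw [zsmul_eq_mul, ← mul_div_assoc, eq_div_iff (NeZero.ne (N : 𝕜))] at hn
    exact mul_right_cancel₀ hp (by linear_combination -hn)
  refine (ZMod.intCast_zmod_eq_zero_iff_dvd j N).mpr ⟨n, ?_⟩
  exact_mod_cast this.trans (mul_comm _ _)

theorem exists_ofZMod_eq {u : AddCircle p} (hu : N • u = 0) : ∃ z, ofZMod p N z = u := by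
  obtain ⟨x, rfl⟩ := QuotientAddGroup.mk_surjective u
  obtain ⟨n, hn⟩ := (coe_eq_zero_iff _).mp ((coe_nsmul (p := p)).trans hu)
  refine ⟨n, ?_⟩
  rw [ofZMod_intCast]
  congr 1
  rw [zsmul_eq_mul, nsmul_eq_mul] at hn
  rw [← mul_div_assoc, div_eq_iff (NeZero.ne (N : 𝕜)), hn, mul_comm]

end AddCircle

open AddCircle

section DotProductPairing

variable {𝕜 : Type*} [Field 𝕜] [CharZero 𝕜] (p : 𝕜) {N : ℕ} [NeZero N] {ι : Type*} [Fintype ι]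

noncomputable def dotProductPairing : (ι → ZMod N) →+ (ι → ZMod N) →+ AddCircle p :=
  AddMonoidHom.mk' (fun t => AddMonoidHom.mk' (fun x => ofZMod p N (t ⬝ᵥ x))
    fun x y => by rw [dotProduct_add, map_add])
    fun t t' => by ext x; simp [add_dotProduct]

variable {p}

theorem dotProductPairing_apply (t x : ι → ZMod N) :
    dotProductPairing p t x = ofZMod p N (t ⬝ᵥ x) := rfl

theorem dotProductPairing_comm (t x : ι → ZMod N) :
    dotProductPairing p t x = dotProductPairing p x t := by
  rw [dotProductPairing_apply, dotProductPairing_apply, dotProduct_comm]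

theorem dotProductPairing_single_one [DecidableEq ι] (t : ι → ZMod N) (i : ι) :
    dotProductPairing p t (Pi.single i 1) = ofZMod p N (t i) := by
  rw [dotProductPairing_apply, dotProduct_single_one]

theorem dotProductPairing_injective (hp : p ≠ 0) :
    Function.Injective (dotProductPairing p : (ι → ZMod N) → _) := by
  classical
  intro t t' h
  funext i
  apply ofZMod_injective hp
  rw [← dotProductPairing_single_one, ← dotProductPairing_single_one, h]

theorem dotProductPairing_surjective :
    Function.Surjective (dotProductPairing p : (ι → ZMod N) → _) := by
  classical
  intro s
  have hs (i : ι) : N • s (Pi.single i 1) = 0 := by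
    rw [← map_nsmul, ← Pi.single_smul', nsmul_eq_mul, mul_one, ZMod.natCast_self, Pi.single_zero,
      map_zero]
  choose t ht using fun i => exists_ofZMod_eq (hs i)
  refine ⟨t, ?_⟩
  ext i c
  obtain ⟨k, rfl⟩ := ZMod.natCast_zmod_surjective c
  simp only [AddMonoidHom.comp_apply, AddMonoidHom.single_apply]
  rw [← nsmul_one, Pi.single_smul', map_nsmul, map_nsmul, dotProductPairing_single_one, ht]

noncomputable def dotProductDualEquiv (hp : p ≠ 0) :
    (ι → ZMod N) ≃+ ((ι → ZMod N) →+ AddCircle p) :=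
  AddEquiv.ofBijective (dotProductPairing p)
    ⟨dotProductPairing_injective hp, dotProductPairing_surjective⟩

end DotProductPairing

section OrthogonalTorsionPairs

variable (G A : Type*) [AddCommMonoid G] [AddCommMonoid A]

def orthogonalTorsionPairs (a b : ℕ) : Set (G × (G →+ A)) :=
  {q | a • q.1 = 0 ∧ b • q.2 = 0 ∧ q.2 q.1 = 0}

variable {G A}

def orthogonalTorsionPairs.swap (Φ : G ≃+ (G →+ A)) (hΦ : ∀ x y, Φ x y = Φ y x) (a b : ℕ) :
    orthogonalTorsionPairs G A a b → orthogonalTorsionPairs G A b a := fun q =>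
  ⟨(Φ.symm q.1.2, Φ q.1.1), by rw [← map_nsmul, q.2.2.1, map_zero],
    by rw [← map_nsmul, q.2.1, map_zero], by rw [hΦ, Φ.apply_symm_apply, q.2.2.2]⟩

theorem orthogonalTorsionPairs.swap_swap (Φ : G ≃+ (G →+ A)) (hΦ : ∀ x y, Φ x y = Φ y x)
    (a b : ℕ) (q : orthogonalTorsionPairs G A a b) : swap Φ hΦ b a (swap Φ hΦ a b q) = q :=
  Subtype.ext (Prod.ext (Φ.symm_apply_apply _) (Φ.apply_symm_apply _))

theorem card_orthogonalTorsionPairs_comm (Φ : G ≃+ (G →+ A)) (hΦ : ∀ x y, Φ x y = Φ y x)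
    (a b : ℕ) :
    Nat.card (orthogonalTorsionPairs G A a b) = Nat.card (orthogonalTorsionPairs G A b a) :=
  Nat.card_congr ⟨orthogonalTorsionPairs.swap Φ hΦ a b, orthogonalTorsionPairs.swap Φ hΦ b a,
    orthogonalTorsionPairs.swap_swap Φ hΦ a b, orthogonalTorsionPairs.swap_swap Φ hΦ b a⟩

end OrthogonalTorsionPairs

theorem stmt_13_general (l m g d : ℕ) (hg : 0 < g) :
    tau l m g d = tau m l g d := by
  have : NeZero g := ⟨hg.ne'⟩
  exact card_orthogonalTorsionPairs_comm (dotProductDualEquiv one_ne_zero)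
    dotProductPairing_comm _ _

/-- For all positive integers `l, m, g, d` one has
`τ_{l,m}^{g,d} = τ_{m,l}^{g,d}`. -/
theorem stmt_13 (l m g d : ℕ) (hl : 0 < l) (hm : 0 < m) (hg : 0 < g) (hd : 0 < d) :
    tau l m g d = tau m l g d :=
  stmt_13_general l m g d hg
end
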